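/- arXiv:1705.01473 — 3 statements merged into one kernel-verified Lean document; each statement's English description precedes it below -/
import Mathlib

section
/- There exists a subset X of the symmetric group S_n and a weight function ω: X → (0,1] summing to 1, such that the twirl over X with weights ω equals the uniform twirl: (1/n!) Σ_{π∈S_n} U^π η (U^π)† = Σ_{π∈X} ω(π) U^π η (U^π)† for all linear operators η on (ℂ^d)^⊗n, and |X| ≤ d^(4n) + 1. -/
open Matrix BigOperators
open scoped Kronecker ComplexOrder

noncomputable section

/-- The permutation unitary `U^π` on `(ℂ^d)^⊗n ≅ ℂ^([d]^n)`, acting on the standard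
product basis by `U^π |e_𝐱⟩ = |e_{𝐱 ∘ π}⟩`. -/
def permU (d n : ℕ) (π : Equiv.Perm (Fin n)) :
    Matrix (Fin n → Fin d) (Fin n → Fin d) ℂ :=
  Matrix.of fun w x => if w = x ∘ ⇑π then 1 else 0

open Classical in
/-- Von Neumann entropy (base 2) of a matrix, via eigenvalues of its Hermitian part
(junk value 0 if not Hermitian). -/
noncomputable def vNEntropy {m : Type*} [Fintype m] [DecidableEq m]
    (ρ : Matrix m m ℂ) : ℝ :=
  if h : ρ.IsHermitian then ∑ i, -(h.eigenvalues i * Real.logb 2 (h.eigenvalues i)) else 0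

/-- Trace norm of a square complex matrix: sum of singular values. -/
noncomputable def traceNorm {m : Type*} [Fintype m] [DecidableEq m]
    (a : Matrix m m ℂ) : ℝ :=
  ∑ i, Real.sqrt ((Matrix.posSemidef_conjTranspose_mul_self a).1.eigenvalues i)

/-- `id ⊗ Φ` acting on block matrices. -/
noncomputable def idTensor {m ι : Type*} [Fintype ι]
    (Φ : Matrix ι ι ℂ → Matrix ι ι ℂ)
    (a : Matrix (m × ι) (m × ι) ℂ) : Matrix (m × ι) (m × ι) ℂ :=
  Matrix.of fun p q => Φ (Matrix.of fun x y => a (p.1, x) (q.1, y)) p.2 q.2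

/-- Diamond norm: supremum over ancilla dimensions of the trace norm of
`(id ⊗ Φ)(a)` over inputs `a` of trace norm one. -/
noncomputable def diamondNorm {ι : Type*} [Fintype ι] [DecidableEq ι]
    (Φ : Matrix ι ι ℂ → Matrix ι ι ℂ) : ℝ :=
  ⨆ m : ℕ, ⨆ a : {a : Matrix (Fin (m + 1) × ι) (Fin (m + 1) × ι) ℂ // traceNorm a = 1},
    traceNorm (idTensor Φ a.1)

def dsgF (d n : ℕ) (π : Equiv.Perm (Fin n)) :
    ((Fin n → Fin d) × (Fin n → Fin d)) × ((Fin n → Fin d) × (Fin n → Fin d)) → ℝ :=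
  fun p => (if p.1.1 = p.2.1 ∘ ⇑π then 1 else 0) * (if p.1.2 = p.2.2 ∘ ⇑π then 1 else 0)

lemma dsg_entry (d n : ℕ) (π : Equiv.Perm (Fin n))
    (η : Matrix (Fin n → Fin d) (Fin n → Fin d) ℂ) (a b : Fin n → Fin d) :
    (permU d n π * η * (permU d n π)ᴴ) a b
      = ∑ x, ∑ y, ((dsgF d n π ((a, b), (x, y)) : ℝ) : ℂ) * η x y := by
  simp only [Matrix.mul_apply, conjTranspose_apply, permU, dsgF, Matrix.of_apply,
    Finset.sum_mul, apply_ite star, star_one, star_zero]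
  rw [Finset.sum_comm]
  refine Finset.sum_congr rfl fun x _ => Finset.sum_congr rfl fun y _ => ?_
  push_cast
  split_ifs <;> simp

lemma dsg_transfer (d n : ℕ) (S : Finset (Equiv.Perm (Fin n))) (c : Equiv.Perm (Fin n) → ℝ)
    (η : Matrix (Fin n → Fin d) (Fin n → Fin d) ℂ) (a b : Fin n → Fin d) :
    (∑ π ∈ S, (c π : ℂ) • (permU d n π * η * (permU d n π)ᴴ)) a b
      = ∑ x, ∑ y, (((∑ π ∈ S, c π • dsgF d n π) ((a, b), (x, y)) : ℝ) : ℂ) * η x y := by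
  have h1 : (∑ π ∈ S, (c π : ℂ) • (permU d n π * η * (permU d n π)ᴴ)) a b
      = ∑ π ∈ S, ∑ x, ∑ y, (c π : ℂ) * (((dsgF d n π ((a, b), (x, y)) : ℝ) : ℂ) * η x y) := by
    simp only [Matrix.sum_apply, Matrix.smul_apply, smul_eq_mul, dsg_entry, Finset.mul_sum]
  rw [h1]
  have h2 : ∀ x y : Fin n → Fin d,
      (((∑ π ∈ S, c π • dsgF d n π) ((a, b), (x, y)) : ℝ) : ℂ) * η x y
        = ∑ π ∈ S, (c π : ℂ) * (((dsgF d n π ((a, b), (x, y)) : ℝ) : ℂ) * η x y) := by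
    intro x y
    simp only [Finset.sum_apply, Pi.smul_apply, smul_eq_mul]
    push_cast
    rw [Finset.sum_mul]
    exact Finset.sum_congr rfl fun π _ => by ring
  simp_rw [h2]
  rw [Finset.sum_comm]
  exact Finset.sum_congr rfl fun x _ => Finset.sum_comm

/-- There exists a symmetric weighted design `(X, ω)` with `|X| ≤ d^(4n) + 1`. -/
theorem symmetric_design_upper_bound (d n : ℕ) :
    ∃ (X : Finset (Equiv.Perm (Fin n))) (ω : Equiv.Perm (Fin n) → ℝ),
      (∀ π ∈ X, 0 < ω π) ∧ (∑ π ∈ X, ω π = 1) ∧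
      (∀ η : Matrix (Fin n → Fin d) (Fin n → Fin d) ℂ,
        ((n.factorial : ℂ))⁻¹ •
            ∑ π : Equiv.Perm (Fin n), permU d n π * η * (permU d n π)ᴴ
          = ∑ π ∈ X, (ω π : ℂ) • (permU d n π * η * (permU d n π)ᴴ)) ∧
      X.card ≤ d ^ (4 * n) + 1 := by
  classical
  set V := (((Fin n → Fin d) × (Fin n → Fin d)) × ((Fin n → Fin d) × (Fin n → Fin d))) → ℝ
  set f : Equiv.Perm (Fin n) → V := dsgF d n with hf
  set x0 : V := ((n.factorial : ℝ))⁻¹ • ∑ π : Equiv.Perm (Fin n), f π with hx0def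
  -- x0 is in the convex hull of the range of f
  have hx0 : x0 ∈ convexHull ℝ (Set.range f) := by
    have hmem := Finset.centerMass_mem_convexHull (Finset.univ)
      (w := fun _ : Equiv.Perm (Fin n) => (1 : ℝ))
      (fun _ _ => zero_le_one)
      (by simp; positivity)
      (fun π _ => Set.mem_range_self (f := f) π)
    have : Finset.univ.centerMass (fun _ : Equiv.Perm (Fin n) => (1 : ℝ)) f = x0 := by
      rw [Finset.centerMass]
      simp [hx0def, Finset.card_univ, Fintype.card_perm]
    rwa [this] at hmem
  rw [convexHull_eq_union] at hx0
  simp only [Set.mem_iUnion] at hx0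
  obtain ⟨t, hts, hti, hxt⟩ := hx0
  rw [Finset.mem_convexHull'] at hxt
  obtain ⟨w, hw0, hw1, hsum⟩ := hxt
  -- cardinality bound
  have hcard : t.card ≤ d ^ (4 * n) + 1 := by
    have h1 : Fintype.card t ≤ Module.finrank ℝ
        (vectorSpan ℝ (Set.range ((↑) : t → V))) + 1 := hti.card_le_finrank_succ
    have h2 : Module.finrank ℝ (vectorSpan ℝ (Set.range ((↑) : t → V)))
        ≤ Module.finrank ℝ V := Submodule.finrank_le _
    have h3 : Module.finrank ℝ V = d ^ (4 * n) := by
      show Module.finrank ℝ ((((Fin n → Fin d) × (Fin n → Fin d)) ×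
        ((Fin n → Fin d) × (Fin n → Fin d))) → ℝ) = d ^ (4 * n)
      rw [Module.finrank_fintype_fun_eq_card]
      simp only [Fintype.card_prod, Fintype.card_fun, Fintype.card_fin]
      ring
    calc t.card = Fintype.card t := (Fintype.card_coe t).symm
      _ ≤ Module.finrank ℝ V + 1 := h1.trans (by omega)
      _ = d ^ (4 * n) + 1 := by rw [h3]
  -- section of f over t
  have hsec : ∀ v ∈ t, ∃ π, f π = v := by
    intro v hv
    exact hts hv
  let g : V → Equiv.Perm (Fin n) := fun v => if h : ∃ π, f π = v then h.choose else 1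
  have hg : ∀ v ∈ t, f (g v) = v := by
    intro v hv
    have h : ∃ π, f π = v := hsec v hv
    simp only [g, dif_pos h]
    exact h.choose_spec
  let t' := t.filter (fun v => 0 < w v)
  have ht't : t' ⊆ t := Finset.filter_subset _ _
  have hginj : Set.InjOn g ↑t' := by
    intro u hu v hv h
    rw [← hg u (ht't hu), ← hg v (ht't hv), h]
  -- sums over t equal sums over t'
  have hdrop : ∑ v ∈ t, w v • v = ∑ v ∈ t', w v • v := by
    rw [Finset.sum_filter]
    refine Finset.sum_congr rfl fun v hv => ?_
    split_ifs with h
    · rfl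
    · have : w v = 0 := le_antisymm (not_lt.1 h) (hw0 v hv)
      simp [this]
  have hdrop1 : ∑ v ∈ t, w v = ∑ v ∈ t', w v := by
    rw [Finset.sum_filter]
    refine Finset.sum_congr rfl fun v hv => ?_
    split_ifs with h
    · rfl
    · exact le_antisymm (not_lt.1 h) (hw0 v hv)
  refine ⟨t'.image g, fun π => w (f π), ?_, ?_, ?_, ?_⟩
  · intro π hπ
    obtain ⟨v, hv, rfl⟩ := Finset.mem_image.1 hπ
    show 0 < w (f (g v))
    rw [hg v (ht't hv)]
    exact (Finset.mem_filter.1 hv).2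
  · rw [Finset.sum_image (fun u hu v hv h => hginj hu hv h)]
    rw [← hw1, hdrop1]
    exact Finset.sum_congr rfl fun v hv => by rw [hg v (ht't hv)]
  · intro η
    -- the vector identity
    have hvec : ∑ π ∈ t'.image g, w (f π) • f π = x0 := by
      rw [Finset.sum_image (fun u hu v hv h => hginj hu hv h)]
      calc ∑ x ∈ t', w (f (g x)) • f (g x) = ∑ x ∈ t', w x • x :=
            Finset.sum_congr rfl fun v hv => by rw [hg v (ht't hv)]
        _ = ∑ x ∈ t, w x • x := hdrop.symm
        _ = x0 := hsum
    ext a b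
    have hL := dsg_transfer d n Finset.univ (fun _ => ((n.factorial : ℝ))⁻¹) η a b
    have hR := dsg_transfer d n (t'.image g) (fun π => w (f π)) η a b
    have hLs : (((n.factorial : ℂ))⁻¹ •
        ∑ π : Equiv.Perm (Fin n), permU d n π * η * (permU d n π)ᴴ) a b
        = (∑ π : Equiv.Perm (Fin n),
            ((((n.factorial : ℝ))⁻¹ : ℝ) : ℂ) • (permU d n π * η * (permU d n π)ᴴ)) a b := by
      rw [← Finset.smul_sum]
      push_cast
      rfl
    rw [hLs, hL, hR]
    have : ∑ π ∈ Finset.univ, (fun _ : Equiv.Perm (Fin n) => ((n.factorial : ℝ))⁻¹) π • f π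
        = ∑ π ∈ t'.image g, w (f π) • f π := by
      rw [hvec, hx0def, Finset.smul_sum]
    rw [this]
  · calc (t'.image g).card ≤ t'.card := Finset.card_image_le
      _ ≤ t.card := Finset.card_le_card ht't
      _ ≤ d ^ (4 * n) + 1 := hcard
end
end

section
/- If (X, ω) is a symmetric weighted design on (ℂ^d)^⊗n, then the Shannon entropy of ω satisfies (1/n) H(ω) ≥ log d − 2 d log(n+1)/n. -/
open Matrix BigOperators
open scoped Kronecker ComplexOrder

noncomputable section

section Aux

def orb {n d : ℕ} (x : Fin n → Fin d) : Finset (Fin n → Fin d) :=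
  Finset.univ.image fun σ : Equiv.Perm (Fin n) => x ∘ ⇑σ

lemma cnt_eq_perm {n d : ℕ} {x y : Fin n → Fin d}
    (h : ∀ v, (Finset.univ.filter fun i => y i = v).card
            = (Finset.univ.filter fun i => x i = v).card) :
    ∃ σ : Equiv.Perm (Fin n), y = x ∘ ⇑σ := by
  have e : ∀ v : Fin d, {i : Fin n // y i = v} ≃ {i : Fin n // x i = v} := fun v =>
    Fintype.equivOfCardEq (by
      simp only [Fintype.card_subtype]
      exact h v)
  refine ⟨(Equiv.sigmaFiberEquiv y).symm.trans
    ((Equiv.sigmaCongrRight e).trans (Equiv.sigmaFiberEquiv x)), ?_⟩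
  funext i
  have h1 : (Equiv.sigmaFiberEquiv y).symm i = ⟨y i, i, rfl⟩ := rfl
  simp only [Function.comp_apply, Equiv.trans_apply, h1, Equiv.sigmaCongrRight_apply]
  exact ((e (y i)) ⟨i, rfl⟩).2.symm

lemma mem_orb_of_cnt_eq {n d : ℕ} {x y : Fin n → Fin d}
    (h : ∀ v, (Finset.univ.filter fun i => y i = v).card
            = (Finset.univ.filter fun i => x i = v).card) :
    y ∈ orb x := by
  obtain ⟨σ, hσ⟩ := cnt_eq_perm h
  exact Finset.mem_image.2 ⟨σ, Finset.mem_univ σ, hσ.symm⟩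

lemma exists_big_orbit (d n : ℕ) (hd : 0 < d) :
    ∃ x : Fin n → Fin d, d ^ n ≤ (n + 1) ^ d * (orb x).card := by
  haveI : Nonempty (Fin d) := ⟨⟨0, hd⟩⟩
  obtain ⟨x₀, -, hmax⟩ := Finset.exists_max_image (Finset.univ : Finset (Fin n → Fin d))
    (fun x => (orb x).card) ⟨Classical.arbitrary _, Finset.mem_univ _⟩
  refine ⟨x₀, ?_⟩
  set B := (orb x₀).card with hB
  have hF : ∀ x : Fin n → Fin d, ∀ v, (Finset.univ.filter fun i => x i = v).card < n + 1 :=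
    fun x v => Nat.lt_succ_of_le (le_trans (Finset.card_filter_le _ _) (by simp))
  let F : (Fin n → Fin d) → (Fin d → Fin (n + 1)) := fun x v =>
    ⟨(Finset.univ.filter fun i => x i = v).card, hF x v⟩
  have hcard : (Finset.univ : Finset (Fin n → Fin d)).card
      = ∑ t : Fin d → Fin (n + 1), (Finset.univ.filter fun x => F x = t).card :=
    Finset.card_eq_sum_card_fiberwise (fun x _ => Finset.mem_univ (F x))
  have hfib : ∀ t : Fin d → Fin (n + 1),
      (Finset.univ.filter fun x => F x = t).card ≤ B := by
    intro t
    rcases Finset.eq_empty_or_nonempty (Finset.univ.filter fun x => F x = t) with he | ⟨z, hz⟩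
    · simp [he]
    · have hz' : F z = t := (Finset.mem_filter.1 hz).2
      have hsub : (Finset.univ.filter fun x => F x = t) ⊆ orb z := by
        intro y hy
        have hy' : F y = t := (Finset.mem_filter.1 hy).2
        refine mem_orb_of_cnt_eq fun v => ?_
        have := congrFun (hy'.trans hz'.symm) v
        exact congrArg Fin.val this
      exact le_trans (Finset.card_le_card hsub) (hmax z (Finset.mem_univ z))
  calc d ^ n = (Finset.univ : Finset (Fin n → Fin d)).card := by
        simp [Finset.card_univ]
    _ ≤ ∑ _t : Fin d → Fin (n + 1), B := by
        rw [hcard]; exact Finset.sum_le_sum fun t _ => hfib t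
    _ = (n + 1) ^ d * B := by
        simp [Finset.sum_const, Finset.card_univ, mul_comm]

def basisProj {n d : ℕ} (x : Fin n → Fin d) : Matrix (Fin n → Fin d) (Fin n → Fin d) ℂ :=
  Matrix.of fun a b => if a = x ∧ b = x then 1 else 0

lemma permU_mul_apply {d n : ℕ} (π : Equiv.Perm (Fin n))
    (η : Matrix (Fin n → Fin d) (Fin n → Fin d) ℂ) (w b : Fin n → Fin d) :
    (permU d n π * η) w b = η (w ∘ ⇑π⁻¹) b := by
  rw [Matrix.mul_apply]
  rw [Finset.sum_eq_single (w ∘ ⇑π⁻¹)]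
  · have : w = (w ∘ ⇑π⁻¹) ∘ ⇑π := by funext i; simp
    simp [permU, ← this]
    exact fun h => absurd this h
  · intro a _ ha
    have : ¬ (w = a ∘ ⇑π) := by
      intro h
      apply ha
      funext i; simp [h]
    simp [permU, this]
  · intro h; exact absurd (Finset.mem_univ _) h

lemma mul_permU_conjT_apply {d n : ℕ} (π : Equiv.Perm (Fin n))
    (η : Matrix (Fin n → Fin d) (Fin n → Fin d) ℂ) (w v : Fin n → Fin d) :
    (η * (permU d n π)ᴴ) w v = η w (v ∘ ⇑π⁻¹) := by
  rw [Matrix.mul_apply]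
  rw [Finset.sum_eq_single (v ∘ ⇑π⁻¹)]
  · have : v = (v ∘ ⇑π⁻¹) ∘ ⇑π := by funext i; simp
    simp [permU, Matrix.conjTranspose_apply, ← this]
    exact fun h => absurd this h
  · intro b _ hb
    have : ¬ (v = b ∘ ⇑π) := by
      intro h; apply hb; funext i; simp [h]
    simp [permU, Matrix.conjTranspose_apply, this]
  · intro h; exact absurd (Finset.mem_univ _) h

lemma twirl_entry {d n : ℕ} (x y : Fin n → Fin d) (π : Equiv.Perm (Fin n)) :
    (permU d n π * basisProj x * (permU d n π)ᴴ) y y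
      = if x ∘ ⇑π = y then 1 else 0 := by
  rw [mul_permU_conjT_apply, permU_mul_apply]
  have hiff : y ∘ ⇑π⁻¹ = x ↔ x ∘ ⇑π = y := by
    constructor
    · intro h; funext i; have := congrFun h (π i); simpa using this.symm
    · intro h; funext i; have := congrFun h (π⁻¹ i); simpa using this.symm
  simp only [basisProj, Matrix.of_apply, and_self]
  by_cases h : x ∘ ⇑π = y
  · simp [hiff.2 h, h]
    exact hiff.2 h
  · have h2 : ¬ (y ∘ ⇑π⁻¹ = x) := fun hh => h (hiff.1 hh)
    simp [h, h2]
    exact h2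

lemma fiber_card_mul_orb {n d : ℕ} (x : Fin n → Fin d) (π₀ : Equiv.Perm (Fin n)) :
    (Finset.univ.filter fun π : Equiv.Perm (Fin n) => x ∘ ⇑π = x ∘ ⇑π₀).card * (orb x).card
      = n.factorial := by
  have htot : (Finset.univ : Finset (Equiv.Perm (Fin n))).card
      = ∑ z ∈ orb x, (Finset.univ.filter fun π : Equiv.Perm (Fin n) => x ∘ ⇑π = z).card :=
    Finset.card_eq_sum_card_fiberwise
      (fun π _ => Finset.mem_image.2 ⟨π, Finset.mem_univ π, rfl⟩)
  have hconst : ∀ z ∈ orb x,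
      (Finset.univ.filter fun π : Equiv.Perm (Fin n) => x ∘ ⇑π = z).card
        = (Finset.univ.filter fun π : Equiv.Perm (Fin n) => x ∘ ⇑π = x ∘ ⇑π₀).card := by
    intro z hz
    obtain ⟨τ, -, hτ⟩ := Finset.mem_image.1 hz
    apply Finset.card_bij (fun π _ => π * (τ⁻¹ * π₀))
    · intro π hπ
      have hπ' : x ∘ ⇑π = z := (Finset.mem_filter.1 hπ).2
      refine Finset.mem_filter.2 ⟨Finset.mem_univ _, ?_⟩
      funext i
      have h1 := congrFun hπ' ((τ⁻¹ * π₀) i)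
      have h2 := congrFun hτ (τ⁻¹ (π₀ i))
      simp only [Function.comp_apply, Equiv.Perm.mul_apply, Equiv.Perm.coe_inv, Equiv.apply_symm_apply] at h1 h2 ⊢
      exact h1.trans h2.symm
    · intro a _ b _ hab
      simpa using mul_right_cancel hab
    · intro π hπ
      have hπ' : x ∘ ⇑π = x ∘ ⇑π₀ := (Finset.mem_filter.1 hπ).2
      refine ⟨π * (π₀⁻¹ * τ), ?_, by group⟩
      refine Finset.mem_filter.2 ⟨Finset.mem_univ _, ?_⟩
      funext i
      have h1 := congrFun hπ' ((π₀⁻¹ * τ) i)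
      have h2 := congrFun hτ i
      simp only [Function.comp_apply, Equiv.Perm.mul_apply, Equiv.Perm.coe_inv, Equiv.apply_symm_apply] at h1 h2 ⊢
      exact h1.trans h2
  have : (Finset.univ : Finset (Equiv.Perm (Fin n))).card
      = (orb x).card * (Finset.univ.filter fun π : Equiv.Perm (Fin n) => x ∘ ⇑π = x ∘ ⇑π₀).card := by
    rw [htot, Finset.sum_congr rfl hconst, Finset.sum_const, smul_eq_mul]
  rw [mul_comm, ← this, Finset.card_univ, Fintype.card_perm, Fintype.card_fin]

lemma omega_mul_orb_le {d n : ℕ} {X : Finset (Equiv.Perm (Fin n))} {ω : Equiv.Perm (Fin n) → ℝ}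
    (hpos : ∀ π ∈ X, 0 < ω π)
    (hdesign : ∀ η : Matrix (Fin n → Fin d) (Fin n → Fin d) ℂ,
      ((n.factorial : ℂ))⁻¹ •
          ∑ π : Equiv.Perm (Fin n), permU d n π * η * (permU d n π)ᴴ
        = ∑ π ∈ X, (ω π : ℂ) • (permU d n π * η * (permU d n π)ᴴ))
    (x : Fin n → Fin d) {π₀ : Equiv.Perm (Fin n)} (hπ₀ : π₀ ∈ X) :
    ω π₀ * ((orb x).card : ℝ) ≤ 1 := by
  classical
  set y := x ∘ ⇑π₀ with hy
  set N := (Finset.univ.filter fun π : Equiv.Perm (Fin n) => x ∘ ⇑π = y).card with hN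
  have hNM : N * (orb x).card = n.factorial := fiber_card_mul_orb x π₀
  have hfac : (0:ℝ) < n.factorial := by exact_mod_cast n.factorial_pos
  have h := congrFun (congrFun (hdesign (basisProj x)) y) y
  simp only [Matrix.smul_apply, Matrix.sum_apply, twirl_entry, smul_eq_mul] at h
  have hL : ∑ π : Equiv.Perm (Fin n), (if x ∘ ⇑π = y then (1:ℂ) else 0) = (N:ℂ) := by
    rw [Finset.sum_boole, hN]
  rw [hL] at h
  have hre : ∑ π ∈ X, ω π * (if x ∘ ⇑π = y then (1:ℝ) else 0) = N / n.factorial := by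
    have hc : ((∑ π ∈ X, ω π * (if x ∘ ⇑π = y then (1:ℝ) else 0) : ℝ) : ℂ)
        = (((N : ℝ) / (n.factorial : ℝ) : ℝ) : ℂ) := by
      push_cast [apply_ite (fun r : ℝ => (r : ℂ))]
      rw [← h]
      field_simp
    exact_mod_cast hc
  have h1 : ω π₀ ≤ (N : ℝ) / n.factorial := by
    rw [← hre]
    have hterm : ω π₀ * (if x ∘ ⇑π₀ = y then (1:ℝ) else 0) = ω π₀ := by
      rw [if_pos hy.symm, mul_one]
    calc ω π₀ = ω π₀ * (if x ∘ ⇑π₀ = y then (1:ℝ) else 0) := hterm.symm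
      _ ≤ ∑ π ∈ X, ω π * (if x ∘ ⇑π = y then (1:ℝ) else 0) := by
          apply Finset.single_le_sum (f := fun π => ω π * (if x ∘ ⇑π = y then (1:ℝ) else 0))
            (fun π hπ => ?_) hπ₀
          have := (hpos π hπ).le
          positivity
  calc ω π₀ * ((orb x).card : ℝ) ≤ ((N : ℝ) / n.factorial) * ((orb x).card : ℝ) := by
        apply mul_le_mul_of_nonneg_right h1 (by positivity)
    _ = 1 := by
        rw [div_mul_eq_mul_div, ← Nat.cast_mul, hNM, div_self (ne_of_gt hfac)]

end Aux

/-- Entropy lower bound for symmetric weighted designs: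
`(1/n) H(ω) ≥ log d − 2 d log(n+1)/n`. -/
theorem design_entropy_lower_bound (d n : ℕ) (hd : 0 < d) (hn : 0 < n)
    (X : Finset (Equiv.Perm (Fin n))) (ω : Equiv.Perm (Fin n) → ℝ)
    (hpos : ∀ π ∈ X, 0 < ω π) (hsum : ∑ π ∈ X, ω π = 1)
    (hdesign : ∀ η : Matrix (Fin n → Fin d) (Fin n → Fin d) ℂ,
      ((n.factorial : ℂ))⁻¹ •
          ∑ π : Equiv.Perm (Fin n), permU d n π * η * (permU d n π)ᴴ
        = ∑ π ∈ X, (ω π : ℂ) • (permU d n π * η * (permU d n π)ᴴ)) :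
    Real.logb 2 d - 2 * d * Real.logb 2 (n + 1) / n
      ≤ (1 / n) * ∑ π ∈ X, -(ω π * Real.logb 2 (ω π)) := by
  classical
  obtain ⟨x, hx⟩ := exists_big_orbit d n hd
  set M := (orb x).card with hMdef
  have hM1 : 1 ≤ M := by
    apply Finset.card_pos.2
    exact ⟨x ∘ ⇑(1 : Equiv.Perm (Fin n)), Finset.mem_image.2 ⟨1, Finset.mem_univ _, rfl⟩⟩
  have hMR : (1:ℝ) ≤ (M:ℝ) := by exact_mod_cast hM1
  have hMpos : (0:ℝ) < M := by linarith
  set L := Real.logb 2 (M:ℝ) with hLdef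
  set H := ∑ π ∈ X, -(ω π * Real.logb 2 (ω π)) with hHdef
  -- step 1: L ≤ H
  have hLH : L ≤ H := by
    have hterm : ∀ π ∈ X, ω π * L ≤ -(ω π * Real.logb 2 (ω π)) := by
      intro π hπ
      have hω := hpos π hπ
      have hωM : ω π ≤ (M:ℝ)⁻¹ := by
        have h0 := omega_mul_orb_le hpos hdesign x hπ
        rw [← one_div, le_div_iff₀ hMpos]
        exact h0
      have hlog : Real.logb 2 (ω π) ≤ -L := by
        have h1 : Real.logb 2 (ω π) ≤ Real.logb 2 ((M:ℝ)⁻¹) :=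
          (Real.logb_le_logb one_lt_two hω (by positivity)).2 hωM
        rwa [Real.logb_inv] at h1
      have := mul_le_mul_of_nonneg_left hlog hω.le
      linarith
    calc L = ∑ π ∈ X, ω π * L := by rw [← Finset.sum_mul, hsum, one_mul]
      _ ≤ H := Finset.sum_le_sum hterm
  -- step 2: n * logb 2 d - d * logb 2 (n+1) ≤ L
  have hdR : (1:ℝ) ≤ (d:ℝ) := by exact_mod_cast hd
  have hstep2 : (n:ℝ) * Real.logb 2 d - d * Real.logb 2 ((n:ℝ)+1) ≤ L := by
    have hxR : (d:ℝ)^n ≤ ((n:ℝ)+1)^d * M := by exact_mod_cast hx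
    have h1 : Real.logb 2 ((d:ℝ)^n) ≤ Real.logb 2 (((n:ℝ)+1)^d * M) :=
      (Real.logb_le_logb one_lt_two (by positivity) (by positivity)).2 hxR
    rw [Real.logb_mul (by positivity) (by positivity), Real.logb_pow, Real.logb_pow] at h1
    linarith
  -- final arithmetic
  have hnR : (0:ℝ) < n := by exact_mod_cast hn
  have hB : (0:ℝ) ≤ Real.logb 2 ((n:ℝ)+1) := Real.logb_nonneg one_lt_two (by linarith)
  have hkey : (n:ℝ) * Real.logb 2 d - 2 * d * Real.logb 2 ((n:ℝ)+1) ≤ H := by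
    have hd0 : (0:ℝ) ≤ d := by positivity
    nlinarith
  calc Real.logb 2 d - 2 * d * Real.logb 2 ((n:ℝ) + 1) / n
      = (1/(n:ℝ)) * ((n:ℝ) * Real.logb 2 d - 2 * d * Real.logb 2 ((n:ℝ)+1)) := by
        field_simp
    _ ≤ (1/(n:ℝ)) * H := mul_le_mul_of_nonneg_left hkey (by positivity)

end
end

section
/- If (X, ω) is a symmetric weighted design on (ℂ^d)^⊗n, then |X| ≥ 2^{H(ω)} ≥ d^n / (n+1)^{2d}; in particular, the cardinality of any symmetric weighted design grows at least exponentially in n. -/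
open Matrix BigOperators
open scoped Kronecker ComplexOrder

noncomputable section

lemma permU_conj_apply (d n : ℕ) (π : Equiv.Perm (Fin n)) (x w : Fin n → Fin d) :
    (permU d n π * Matrix.single x x (1:ℂ) * (permU d n π)ᴴ) w w
      = if x ∘ ⇑π = w then 1 else 0 := by
  classical
  have hperm : ∀ u : Fin n → Fin d, (w = u ∘ ⇑π) = (u = w ∘ ⇑π⁻¹) := by
    intro u
    simp only [eq_iff_iff]
    constructor
    · rintro rfl; funext k; simp
    · rintro rfl; funext k; simp
  simp only [Matrix.mul_apply, permU, Matrix.conjTranspose_apply, Matrix.of_apply,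
    Matrix.single, hperm]
  simp only [ite_mul, one_mul, zero_mul, Finset.sum_ite_eq' Finset.univ (w ∘ ⇑π⁻¹),
    Finset.mem_univ, if_true, mul_ite, mul_one, mul_zero, apply_ite (star : ℂ → ℂ),
    star_one, star_zero, ite_and]
  rw [Finset.sum_ite_eq Finset.univ x]
  simp only [Finset.mem_univ, if_true]
  have heq : (x = w ∘ ⇑π⁻¹) ↔ (x ∘ ⇑π = w) := by
    constructor
    · rintro rfl; funext k; simp
    · rintro rfl; funext k; simp
  by_cases h : x = w ∘ ⇑π⁻¹
  · rw [if_pos h, if_pos h, if_pos (heq.1 h)]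
  · rw [if_neg h, if_neg (fun hc => h (heq.2 hc))]

lemma exists_perm_of_counts_eq {d n : ℕ} (x w : Fin n → Fin d)
    (h : ∀ v, (Finset.univ.filter fun k => w k = v).card
        = (Finset.univ.filter fun k => x k = v).card) :
    ∃ π : Equiv.Perm (Fin n), w = x ∘ ⇑π := by
  classical
  have hcard : ∀ v : Fin d, Fintype.card {k // w k = v} = Fintype.card {k // x k = v} := by
    intro v; simpa [Fintype.card_subtype] using h v
  refine ⟨Equiv.ofFiberEquiv (f := w) (g := x) fun v => Fintype.equivOfCardEq (hcard v), ?_⟩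
  funext k
  exact (Equiv.ofFiberEquiv_map _ k).symm

set_option maxHeartbeats 1000000 in
/-- Cardinality bound from the entropy bound: every symmetric weighted design
satisfies `|X| ≥ 2^{H(ω)} ≥ dⁿ/(n+1)^{2d}`. -/
theorem design_cardinality_exponential_lower_bound (d n : ℕ)
    (hd : 0 < d) (hn : 0 < n)
    (X : Finset (Equiv.Perm (Fin n))) (ω : Equiv.Perm (Fin n) → ℝ)
    (hpos : ∀ π ∈ X, 0 < ω π) (hsum : ∑ π ∈ X, ω π = 1)
    (hdesign : ∀ η : Matrix (Fin n → Fin d) (Fin n → Fin d) ℂ,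
      ((n.factorial : ℂ))⁻¹ •
          ∑ π : Equiv.Perm (Fin n), permU d n π * η * (permU d n π)ᴴ
        = ∑ π ∈ X, (ω π : ℂ) • (permU d n π * η * (permU d n π)ᴴ)) :
    (2 : ℝ) ^ (∑ π ∈ X, -(ω π * Real.logb 2 (ω π))) ≤ (X.card : ℝ) ∧
    (d : ℝ) ^ n / ((n : ℝ) + 1) ^ (2 * d)
      ≤ (2 : ℝ) ^ (∑ π ∈ X, -(ω π * Real.logb 2 (ω π))) := by
  classical
  have hXne : X.Nonempty := by
    rcases Finset.eq_empty_or_nonempty X with h | h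
    · exfalso; rw [h] at hsum; simp at hsum
    · exact h
  set H : ℝ := ∑ π ∈ X, -(ω π * Real.logb 2 (ω π)) with hH
  have hcardpos : (0:ℝ) < X.card := by exact_mod_cast Finset.card_pos.2 hXne
  -- Part 1
  have part1 : (2:ℝ) ^ H ≤ (X.card : ℝ) := by
    have jensen : ∑ π ∈ X, ω π * Real.log (ω π)⁻¹
        ≤ Real.log (∑ π ∈ X, ω π * (ω π)⁻¹) := by
      have := (strictConcaveOn_log_Ioi.concaveOn).le_map_sum
        (t := X) (w := ω) (p := fun π => (ω π)⁻¹)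
        (fun i hi => (hpos i hi).le) hsum
        (fun i hi => Set.mem_Ioi.2 (inv_pos.2 (hpos i hi)))
      simpa [smul_eq_mul] using this
    have hsum_inv : ∑ π ∈ X, ω π * (ω π)⁻¹ = (X.card : ℝ) := by
      rw [Finset.sum_congr rfl (fun π hπ => mul_inv_cancel₀ (hpos π hπ).ne')]
      simp
    have h2log : (0:ℝ) < Real.log 2 := Real.log_pos one_lt_two
    have hHle : H ≤ Real.logb 2 (X.card : ℝ) := by
      have hrw : H = (∑ π ∈ X, ω π * Real.log (ω π)⁻¹) / Real.log 2 := by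
        rw [Finset.sum_div]
        refine Finset.sum_congr rfl fun π hπ => ?_
        rw [Real.log_inv, Real.logb]
        ring
      rw [hrw, Real.logb, ← hsum_inv]
      gcongr
    calc (2:ℝ) ^ H ≤ (2:ℝ) ^ Real.logb 2 (X.card : ℝ) :=
        (Real.rpow_le_rpow_left_iff one_lt_two).2 hHle
      _ = (X.card : ℝ) := Real.rpow_logb two_pos (by norm_num) hcardpos
  -- Part 2
  refine ⟨part1, ?_⟩
  have hdR : (0:ℝ) < (d:ℝ) := by exact_mod_cast hd
  set cnt : (Fin n → Fin d) → (Fin d → Fin (n + 1)) := fun w v =>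
    ⟨(Finset.univ.filter fun k => w k = v).card, by
      have h1 := Finset.card_filter_le (Finset.univ : Finset (Fin n)) (fun k => w k = v)
      have h2 : (Finset.univ : Finset (Fin n)).card = n := by simp
      omega⟩ with hcnt
  set c : ℝ := (d:ℝ) ^ n / ((n:ℝ) + 1) ^ d with hc
  have hn1 : (0:ℝ) < (n:ℝ) + 1 := by positivity
  have hcpos : 0 < c := by rw [hc]; positivity
  have hfibsum : ∑ μ : Fin d → Fin (n+1),
      ((((Finset.univ : Finset (Fin n → Fin d)).filter fun w => cnt w = μ).card : ℝ))
      = (d:ℝ) ^ n := by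
    have h1 := Finset.card_eq_sum_card_fiberwise
      (f := cnt) (s := (Finset.univ : Finset (Fin n → Fin d)))
      (t := Finset.univ) (fun y _ => Finset.mem_univ _)
    have hcard : (Finset.univ : Finset (Fin n → Fin d)).card = d ^ n := by
      simp [Finset.card_univ]
    rw [hcard] at h1
    exact_mod_cast (congrArg (fun z : ℕ => (z:ℝ)) h1).symm
  obtain ⟨μ, _, hμ⟩ : ∃ μ ∈ (Finset.univ : Finset (Fin d → Fin (n+1))), c ≤
      ((((Finset.univ : Finset (Fin n → Fin d)).filter fun w => cnt w = μ).card : ℝ)) := by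
    apply Finset.exists_le_of_sum_le Finset.univ_nonempty
    rw [hfibsum, Finset.sum_const, Finset.card_univ]
    have hcard : Fintype.card (Fin d → Fin (n+1)) = (n+1) ^ d := by
      simp
    rw [hcard, nsmul_eq_mul, hc]
    push_cast
    rw [mul_div_cancel₀]
    positivity
  set F := (Finset.univ : Finset (Fin n → Fin d)).filter fun w => cnt w = μ with hF
  have hFne : F.Nonempty := by
    rw [← Finset.card_pos]
    have : (0:ℝ) < F.card := lt_of_lt_of_le hcpos hμ
    exact_mod_cast this
  obtain ⟨x, hx⟩ := hFne
  have hxμ : cnt x = μ := (Finset.mem_filter.1 hx).2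
  set O := Finset.image (fun π : Equiv.Perm (Fin n) => x ∘ ⇑π) Finset.univ with hO
  have hFO : F ⊆ O := by
    intro w hw
    have hwμ : cnt w = μ := (Finset.mem_filter.1 hw).2
    have hcounts : ∀ v, (Finset.univ.filter fun k => w k = v).card
        = (Finset.univ.filter fun k => x k = v).card := by
      intro v
      exact congrArg Fin.val (congrFun (hwμ.trans hxμ.symm) v)
    obtain ⟨π, hπ⟩ := exists_perm_of_counts_eq x w hcounts
    rw [hO]
    exact Finset.mem_image.2 ⟨π, Finset.mem_univ _, hπ.symm⟩
  have hfacpos : (0:ℝ) < (n.factorial : ℝ) := by exact_mod_cast n.factorial_pos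
  -- the design equation, specialized
  have key : ∀ w : Fin n → Fin d,
      ∑ π ∈ X.filter (fun π : Equiv.Perm (Fin n) => x ∘ ⇑π = w), ω π
        = ((Finset.univ.filter fun π : Equiv.Perm (Fin n) => x ∘ ⇑π = w).card : ℝ)
          / (n.factorial : ℝ) := by
    intro w
    have h := hdesign (Matrix.single x x (1:ℂ))
    have h2 : (((n.factorial : ℂ))⁻¹ •
          ∑ π : Equiv.Perm (Fin n),
            permU d n π * Matrix.single x x (1:ℂ) * (permU d n π)ᴴ) w w
        = (∑ π ∈ X, (ω π : ℂ) •
            (permU d n π * Matrix.single x x (1:ℂ) * (permU d n π)ᴴ)) w w := by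
      rw [h]
    simp only [Matrix.smul_apply, Matrix.sum_apply, permU_conj_apply, smul_eq_mul,
      Finset.sum_boole, mul_ite, mul_one, mul_zero, ← Finset.sum_filter] at h2
    have h3 : ((∑ π ∈ X.filter (fun π : Equiv.Perm (Fin n) => x ∘ ⇑π = w), ω π : ℝ) : ℂ)
        = ((((Finset.univ.filter fun π : Equiv.Perm (Fin n) => x ∘ ⇑π = w).card : ℝ)
            / (n.factorial : ℝ) : ℝ) : ℂ) := by
      push_cast
      rw [← h2]
      ring
    exact_mod_cast h3
  -- stabilizer
  set s := (Finset.univ.filter fun π : Equiv.Perm (Fin n) => x ∘ ⇑π = x).card with hs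
  have hspos : 0 < s := by
    rw [hs]
    apply Finset.card_pos.2
    exact ⟨1, by simp⟩
  have hconst : ∀ w ∈ O, (Finset.univ.filter fun π : Equiv.Perm (Fin n) => x ∘ ⇑π = w).card = s := by
    intro w hw
    obtain ⟨τ, -, rfl⟩ := Finset.mem_image.1 hw
    rw [hs]
    apply Finset.card_bij' (fun π _ => π * τ⁻¹) (fun π _ => π * τ)
    · intro π hπ
      simp only [Finset.mem_filter, Finset.mem_univ, true_and] at hπ ⊢
      funext k
      have h1 := congrFun hπ (τ⁻¹ k)
      simpa [Equiv.Perm.mul_apply] using h1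
    · intro π hπ
      simp only [Finset.mem_filter, Finset.mem_univ, true_and] at hπ ⊢
      funext k
      have h1 := congrFun hπ (τ k)
      simpa [Equiv.Perm.mul_apply] using h1
    · intro π _
      simp [mul_assoc]
    · intro π _
      simp [mul_assoc]
  have hOcard : 0 < O.card := Finset.card_pos.2 ⟨x, hFO hx⟩
  have hOS : O.card * s = n.factorial := by
    have h1 : (Finset.univ : Finset (Equiv.Perm (Fin n))).card
        = ∑ w ∈ O, (Finset.univ.filter fun π : Equiv.Perm (Fin n) => x ∘ ⇑π = w).card :=
      Finset.card_eq_sum_card_fiberwise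
        (fun π _ => Finset.mem_image_of_mem _ (Finset.mem_univ π))
    rw [Finset.sum_congr rfl hconst, Finset.sum_const, smul_eq_mul] at h1
    have h2 : (Finset.univ : Finset (Equiv.Perm (Fin n))).card = n.factorial := by
      simp [Finset.card_univ, Fintype.card_perm, Fintype.card_fin]
    rw [← h1, h2]
  set p : ℝ := (s : ℝ) / (n.factorial : ℝ) with hp
  have hppos : 0 < p := by
    rw [hp]
    apply div_pos _ hfacpos
    exact_mod_cast hspos
  have hOcardR : (0:ℝ) < (O.card : ℝ) := by exact_mod_cast hOcard
  have hcastOS : (O.card : ℝ) * (s : ℝ) = (n.factorial : ℝ) := by exact_mod_cast hOS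
  have hOp : (O.card : ℝ) * p = 1 := by
    rw [hp, ← mul_div_assoc, hcastOS, div_self hfacpos.ne']
  have hpO : p = ((O.card : ℝ))⁻¹ := by
    rw [inv_eq_one_div, eq_div_iff hOcardR.ne']
    linarith [hOp]
  have hval : ∀ w ∈ O, (∑ π ∈ X.filter (fun π : Equiv.Perm (Fin n) => x ∘ ⇑π = w), ω π) = p := by
    intro w hw
    rw [key w, hconst w hw]
  have hchain : Real.logb 2 (O.card : ℝ) ≤ H := by
    have hsplit : H = ∑ w ∈ O, ∑ π ∈ X.filter (fun π : Equiv.Perm (Fin n) => x ∘ ⇑π = w),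
        -(ω π * Real.logb 2 (ω π)) :=
      (Finset.sum_fiberwise_of_maps_to
        (fun π _ => Finset.mem_image_of_mem _ (Finset.mem_univ π)) _).symm
    rw [hsplit]
    have hstep : ∀ w ∈ O,
        (∑ π ∈ X.filter (fun π : Equiv.Perm (Fin n) => x ∘ ⇑π = w), ω π) * (-Real.logb 2 p)
          ≤ ∑ π ∈ X.filter (fun π : Equiv.Perm (Fin n) => x ∘ ⇑π = w), -(ω π * Real.logb 2 (ω π)) := by
      intro w hw
      rw [Finset.sum_mul]
      apply Finset.sum_le_sum
      intro π hπ
      have hπX : π ∈ X := (Finset.mem_filter.1 hπ).1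
      have h1 : ω π ≤ p := by
        rw [← hval w hw]
        exact Finset.single_le_sum (fun i hi => (hpos i (Finset.mem_filter.1 hi).1).le) hπ
      have h2 : Real.logb 2 (ω π) ≤ Real.logb 2 p :=
        Real.logb_le_logb_of_le one_lt_two (hpos π hπX) h1
      calc ω π * -Real.logb 2 p ≤ ω π * -Real.logb 2 (ω π) :=
          mul_le_mul_of_nonneg_left (neg_le_neg h2) (hpos π hπX).le
        _ = -(ω π * Real.logb 2 (ω π)) := by ring
    calc Real.logb 2 (O.card : ℝ)
        = (O.card : ℝ) * (p * -Real.logb 2 p) := by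
          rw [hpO, Real.logb_inv]
          field_simp
      _ = ∑ w ∈ O, p * -Real.logb 2 p := by
          rw [Finset.sum_const, nsmul_eq_mul]
      _ = ∑ w ∈ O, (∑ π ∈ X.filter (fun π : Equiv.Perm (Fin n) => x ∘ ⇑π = w), ω π) * (-Real.logb 2 p) := by
          refine Finset.sum_congr rfl fun w hw => ?_
          rw [hval w hw]
      _ ≤ _ := Finset.sum_le_sum hstep
  have hcO : c ≤ (O.card : ℝ) := by
    refine le_trans hμ ?_
    exact_mod_cast Finset.card_le_card hFO
  have h1 : (d:ℝ) ^ n / ((n:ℝ) + 1) ^ (2 * d) ≤ c := by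
    rw [hc]
    apply div_le_div_of_nonneg_left (by positivity) (by positivity)
    apply pow_le_pow_right₀ (by linarith)
    omega
  have h2 : c ≤ (2:ℝ) ^ H := by
    calc c ≤ (O.card : ℝ) := hcO
      _ = (2:ℝ) ^ Real.logb 2 (O.card : ℝ) :=
        (Real.rpow_logb two_pos (by norm_num) hOcardR).symm
      _ ≤ (2:ℝ) ^ H := (Real.rpow_le_rpow_left_iff one_lt_two).2 hchain
  linarith
end
end
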